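/- arXiv:2510.10324 — 9 statements merged into one kernel-verified Lean document; each statement's English description precedes it below -/
import Mathlib

section
/- Let n ≥ 1 and let μ = (μ_1,…,μ_{n+1}) be real-valued random variables on a probability space (Ω, P) that are exchangeable, i.e., for every permutation σ of {1,…,n+1} the joint law of (μ_{σ(1)},…,μ_{σ(n+1)}) equals the joint law of (μ_1,…,μ_{n+1}). Then for every α ∈ (0,1), P( #{i ∈ {1,…,n+1} : μ_i ≥ μ_{n+1}} ≤ ⌊(n+1)α⌋ ) ≤ α. -/
/-! Call `numAtLeast x j = #{i | x j ≤ x i}` the rank of `j` in a score vector `x`.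
Pointwise, at most `t` indices have rank `≤ t`: if `S` is the set of them and `j₀ ∈ S` has the
smallest score, every index of `S` is counted in the rank of `j₀`. Exchangeability makes the events
`{rank j ≤ t}` equiprobable, so integrating the pointwise bound gives
`(n + 1) · P(rank (n + 1) ≤ t) ≤ t`; with `t = (n + 1) α` this is the theorem, since
`c ≤ ⌊t⌋ ↔ c ≤ t` for integers `c`. -/

open MeasureTheory Finset ENNReal

section Rank

variable {ι β : Type*} [Fintype ι] [LinearOrder β]

def numAtLeast (x : ι → β) (j : ι) : ℕ := #{i | x j ≤ x i}

lemma numAtLeast_comp_perm (x : ι → β) (σ : Equiv.Perm ι) (j : ι) :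
    numAtLeast (x ∘ σ) j = numAtLeast x (σ j) :=
  card_equiv σ (by simp)

lemma card_numAtLeast_le_le (x : ι → β) (t : ℝ) :
    (#{j | (numAtLeast x j : ℝ) ≤ t} : ℝ≥0∞) ≤ ENNReal.ofReal t := by
  set S : Finset ι := {j | (numAtLeast x j : ℝ) ≤ t}
  rcases S.eq_empty_or_nonempty with hS | hS
  · simp [hS]
  obtain ⟨j₀, hj₀, hmin⟩ := S.exists_min_image x hS
  have hS_le : #S ≤ numAtLeast x j₀ :=
    card_le_card fun i hi => by simpa [numAtLeast] using hmin i hi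
  rw [← ofReal_natCast]
  exact ofReal_le_ofReal (le_trans (by exact_mod_cast hS_le) (mem_filter.1 hj₀).2)

end Rank

section Measure

variable {Ω ι : Type*} [MeasurableSpace Ω] {P : Measure Ω}

open Classical in
lemma sum_measure_le_of_card_mem_le [Fintype ι] {A : ι → Set Ω} (hA : ∀ j, MeasurableSet (A j))
    {c : ℝ≥0∞} (hc : ∀ ω, (#{j | ω ∈ A j} : ℝ≥0∞) ≤ c) :
    ∑ j, P (A j) ≤ c * P Set.univ :=
  calc ∑ j, P (A j) = ∫⁻ ω, ∑ j, (A j).indicator 1 ω ∂P := by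
        rw [lintegral_finsetSum _ fun j _ => measurable_one.indicator (hA j)]
        simp only [lintegral_indicator_one (hA _)]
    _ = ∫⁻ ω, (#{j | ω ∈ A j} : ℝ≥0∞) ∂P := by
        simp only [Set.indicator_apply, Pi.one_apply, sum_boole]
    _ ≤ ∫⁻ _, c ∂P := lintegral_mono hc
    _ = c * P Set.univ := lintegral_const c

def Exchangeable {β : Type*} [MeasurableSpace β] (X : Ω → ι → β) (P : Measure Ω) : Prop :=
  ∀ σ : Equiv.Perm ι, P.map (fun ω => X ω ∘ σ) = P.map X

lemma Exchangeable.measure_comp_perm_mem {β : Type*} [MeasurableSpace β] {X : Ω → ι → β}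
    (hX : Exchangeable X P) (hXm : Measurable X) (σ : Equiv.Perm ι) {B : Set (ι → β)}
    (hB : MeasurableSet B) :
    P {ω | X ω ∘ σ ∈ B} = P (X ⁻¹' B) := by
  have hσ : Measurable fun ω => X ω ∘ σ := by fun_prop
  have h := congrArg (· B) (hX σ)
  simp only [Measure.map_apply hσ hB, Measure.map_apply hXm hB] at h
  exact h

lemma measurable_numAtLeast [Fintype ι] (j : ι) :
    Measurable fun x : ι → ℝ => numAtLeast x j := by
  simp_rw [numAtLeast, card_filter]
  exact Finset.measurable_sum _ fun i _ =>
    Measurable.ite (measurableSet_le (measurable_pi_apply j) (measurable_pi_apply i))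
      measurable_const measurable_const

theorem Exchangeable.card_mul_measure_numAtLeast_le [Fintype ι] [DecidableEq ι]
    [IsProbabilityMeasure P] {X : Ω → ι → ℝ} (hX : Exchangeable X P) (hXm : Measurable X)
    (j : ι) (t : ℝ) :
    Fintype.card ι * P {ω | (numAtLeast (X ω) j : ℝ) ≤ t} ≤ ENNReal.ofReal t := by
  have hB : ∀ k, MeasurableSet {x : ι → ℝ | (numAtLeast x k : ℝ) ≤ t} := fun k =>
    measurable_numAtLeast k (MeasurableSet.of_discrete (s := {m : ℕ | (m : ℝ) ≤ t}))
  have hsame : ∀ k,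
      P {ω | (numAtLeast (X ω) k : ℝ) ≤ t} = P {ω | (numAtLeast (X ω) j : ℝ) ≤ t} := fun k => by
    simpa [numAtLeast_comp_perm] using hX.measure_comp_perm_mem hXm (Equiv.swap j k) (hB j)
  calc Fintype.card ι * P {ω | (numAtLeast (X ω) j : ℝ) ≤ t}
      = ∑ k, P {ω | (numAtLeast (X ω) k : ℝ) ≤ t} := by simp [hsame]
    _ ≤ ENNReal.ofReal t * P Set.univ :=
        sum_measure_le_of_card_mem_le (fun k => hXm (hB k)) fun ω => by
          convert card_numAtLeast_le_le (X ω) t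
          exact Iff.rfl
    _ = ENNReal.ofReal t := by simp

end Measure

theorem stmt_0_general
    {Ω : Type*} [MeasurableSpace Ω] (P : Measure Ω) [IsProbabilityMeasure P]
    (n : ℕ)
    (μ : Ω → Fin (n + 1) → ℝ) (hμ : Measurable μ)
    (hexch : ∀ σ : Equiv.Perm (Fin (n + 1)),
      Measure.map (fun ω => μ ω ∘ σ) P = Measure.map μ P)
    (α : ℝ) :
    P {ω | ((Finset.univ.filter
        (fun i : Fin (n + 1) => μ ω (Fin.last n) ≤ μ ω i)).card : ℤ)
          ≤ ⌊((n : ℝ) + 1) * α⌋}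
      ≤ ENNReal.ofReal α := by
  have hset : {ω | ((Finset.univ.filter
        (fun i : Fin (n + 1) => μ ω (Fin.last n) ≤ μ ω i)).card : ℤ) ≤ ⌊((n : ℝ) + 1) * α⌋}
      = {ω | (numAtLeast (μ ω) (Fin.last n) : ℝ) ≤ (n + 1) * α} := by
    ext ω
    simp [Int.le_floor, numAtLeast]
  have hcard : ENNReal.ofReal ((n : ℝ) + 1) = Fintype.card (Fin (n + 1)) := by
    rw [Fintype.card_fin]
    exact_mod_cast ofReal_natCast (n + 1)
  have h := Exchangeable.card_mul_measure_numAtLeast_le (P := P) hexch hμ (Fin.last n)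
    ((n + 1) * α)
  rw [ENNReal.ofReal_mul (by positivity), hcard, ← hset] at h
  exact (ENNReal.mul_le_mul_iff_right (by simp) (by simp)).1 h

/-- Finite-sample validity bound for exchangeable non-conformity scores
(Theorem 1 of the paper, expressed via the scores): if `μ = (μ_1, …, μ_{n+1})`
is exchangeable, then for every `α ∈ (0,1)`,
`P(#{i : μ_i ≥ μ_{n+1}} ≤ ⌊(n+1)α⌋) ≤ α`. -/
theorem stmt_0
    {Ω : Type*} [MeasurableSpace Ω] (P : Measure Ω) [IsProbabilityMeasure P]
    (n : ℕ) (hn : 1 ≤ n)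
    (μ : Ω → Fin (n + 1) → ℝ) (hμ : Measurable μ)
    (hexch : ∀ σ : Equiv.Perm (Fin (n + 1)),
      Measure.map (fun ω => μ ω ∘ σ) P = Measure.map μ P)
    (α : ℝ) (hα : α ∈ Set.Ioo (0 : ℝ) 1) :
    P {ω | ((Finset.univ.filter
        (fun i : Fin (n + 1) => μ ω (Fin.last n) ≤ μ ω i)).card : ℤ)
          ≤ ⌊((n : ℝ) + 1) * α⌋}
      ≤ ENNReal.ofReal α :=
  stmt_0_general P n μ hμ hexch α
end

section
/- Let E be a measurable space, n ≥ 1, and let Z : Ω → (Fin (n+1) → E) be a measurable random vector on a probability space (Ω, P) that is exchangeable, i.e., for every permutation σ of Fin (n+1) the law of (Z_{σ(i)})_i equals the law of (Z_i)_i. Let M : (Fin n → E) → E → ℝ be measurable and symmetric in its first argument, i.e., M(w ∘ τ, e) = M(w, e) for every permutation τ of Fin n, every w : Fin n → E and every e ∈ E. Define the non-conformity scores μ_i = M( (Z_{j})_{j ≠ i}, Z_i ) for i ∈ Fin (n+1), where (Z_j)_{j ≠ i} denotes the remaining n coordinates enumerated in their natural order (the symmetry of M makes the enumeration irrelevant).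 Then the vector (μ_1,…,μ_{n+1}) is exchangeable: for every permutation σ of Fin (n+1), the law of (μ_{σ(i)})_i equals the law of (μ_i)_i. -/
open MeasureTheory

/-- For a permutation `σ` of `Fin (n+1)` and `i : Fin (n+1)`, there is a permutation
`τ` of `Fin n` such that `σ (i.succAbove j) = (σ i).succAbove (τ j)` for all `j`. -/
lemma exists_perm_succAbove {n : ℕ} (σ : Equiv.Perm (Fin (n + 1))) (i : Fin (n + 1)) :
    ∃ τ : Equiv.Perm (Fin n), ∀ j : Fin n, σ (i.succAbove j) = (σ i).succAbove (τ j) := by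
  let e₁ : Fin n ≃ { x : Fin (n + 1) // x ≠ i } := finSuccAboveEquiv i
  let e₂ : Fin n ≃ { x : Fin (n + 1) // x ≠ σ i } := finSuccAboveEquiv (σ i)
  let eσ : { x : Fin (n + 1) // x ≠ i } ≃ { x : Fin (n + 1) // x ≠ σ i } :=
    Equiv.subtypeEquiv σ (fun x => by simp)
  refine ⟨(e₁.trans eσ).trans e₂.symm, fun j => ?_⟩
  set k := ((e₁.trans eσ).trans e₂.symm) j with hk
  have h : e₂ k = eσ (e₁ j) := by simp [hk]
  calc σ (i.succAbove j) = (eσ (e₁ j) : Fin (n + 1)) := by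
        simp [eσ, e₁, finSuccAboveEquiv_apply]
    _ = (e₂ k : Fin (n + 1)) := by rw [h]
    _ = (σ i).succAbove k := congrArg Subtype.val (finSuccAboveEquiv_apply (σ i) k)

/-- Exchangeable data plus a symmetric non-conformity measure yield exchangeable
non-conformity scores: with `μ_i = M((Z_j)_{j ≠ i}, Z_i)` (remaining coordinates in
their natural order, via `Fin.succAbove`), the law of `(μ_{σ(i)})_i` equals the law
of `(μ_i)_i` for every permutation `σ`. -/
theorem stmt_1
    {Ω : Type*} [MeasurableSpace Ω] (P : Measure Ω) [IsProbabilityMeasure P]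
    {E : Type*} [MeasurableSpace E]
    (n : ℕ) (hn : 1 ≤ n)
    (Z : Ω → Fin (n + 1) → E) (hZ : Measurable Z)
    (hZexch : ∀ σ : Equiv.Perm (Fin (n + 1)),
      Measure.map (fun ω => Z ω ∘ σ) P = Measure.map Z P)
    (M : (Fin n → E) → E → ℝ)
    (hM : Measurable (fun p : (Fin n → E) × E => M p.1 p.2))
    (hMsym : ∀ (τ : Equiv.Perm (Fin n)) (w : Fin n → E) (e : E), M (w ∘ τ) e = M w e) :
    ∀ σ : Equiv.Perm (Fin (n + 1)),
      Measure.map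
        (fun ω => (fun i : Fin (n + 1) =>
          M (fun j : Fin n => Z ω (i.succAbove j)) (Z ω i)) ∘ σ) P
      = Measure.map
        (fun ω (i : Fin (n + 1)) =>
          M (fun j : Fin n => Z ω (i.succAbove j)) (Z ω i)) P := by
  intro σ
  set F : (Fin (n + 1) → E) → Fin (n + 1) → ℝ :=
    fun z i => M (fun j => z (i.succAbove j)) (z i) with hF_def
  have hF : Measurable F := by
    apply measurable_pi_lambda
    intro i
    have hg : Measurable (fun z : Fin (n + 1) → E =>
        ((fun j => z (i.succAbove j), z i) : (Fin n → E) × E)) :=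
      (measurable_pi_lambda _ fun j =>
        measurable_pi_apply (i.succAbove j)).prodMk (measurable_pi_apply i)
    exact hM.comp hg
  have key : ∀ z : Fin (n + 1) → E, (F z) ∘ σ = F (z ∘ σ) := by
    intro z
    funext i
    obtain ⟨τ, hτ⟩ := exists_perm_succAbove σ i
    have : (fun j : Fin n => z (σ (i.succAbove j)))
        = (fun j : Fin n => z ((σ i).succAbove j)) ∘ τ := by
      funext j; simp [hτ j]
    simp only [Function.comp, hF_def, this]
    exact (hMsym τ (fun j => z ((σ i).succAbove j)) (z (σ i))).symm
  have hL : (fun ω => (fun i : Fin (n + 1) =>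
      M (fun j : Fin n => Z ω (i.succAbove j)) (Z ω i)) ∘ σ)
      = F ∘ (fun ω => Z ω ∘ σ) := by
    funext ω
    exact key (Z ω)
  have hR : (fun ω (i : Fin (n + 1)) =>
      M (fun j : Fin n => Z ω (i.succAbove j)) (Z ω i)) = F ∘ Z := rfl
  have hZσ : Measurable (fun ω => Z ω ∘ σ) :=
    measurable_pi_lambda _ fun i => (measurable_pi_apply (σ i)).comp hZ
  rw [hL, hR, ← Measure.map_map hF hZσ, ← Measure.map_map hF hZ, hZexch σ]
end

section
/- Let E be a measurable space, n ≥ 1, Z : Ω → (Fin (n+1) → E) an exchangeable measurable random vector on a probability space (Ω, P) (its law is invariant under every permutation of the n+1 coordinates), and M : (Fin n → E) → E → ℝ a measurable map symmetric in its first argument (invariant under every permutation of the n inputs). Define μ_i = M( (Z_j)_{j ≠ i}, Z_i ) for i ∈ Fin (n+1). Then for every α ∈ (0,1), P( #{i ∈ Fin (n+1) : μ_i ≥ μ_{n+1}} > (n+1)α ) ≥ 1 − α. -/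
open MeasureTheory Finset
open scoped ENNReal

/-- Pigeonhole: at most `k` indices have top-rank ≤ `k`. -/
lemma conformal_pigeon {m : ℕ} (v : Fin m → ℝ) (k : ℕ) :
    ((univ.filter (fun i : Fin m =>
        (univ.filter (fun j => v i ≤ v j)).card ≤ k)).card) ≤ k := by
  set S := univ.filter (fun i : Fin m =>
      (univ.filter (fun j => v i ≤ v j)).card ≤ k) with hS
  rcases S.eq_empty_or_nonempty with h | h
  · simp [h]
  · obtain ⟨i0, hi0, hmin⟩ := S.exists_min_image v h
    have hsub : S ⊆ univ.filter (fun j => v i0 ≤ v j) := by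
      intro j hj
      simp only [mem_filter, mem_univ, true_and]
      exact hmin j hj
    have h1 : S.card ≤ (univ.filter (fun j => v i0 ≤ v j)).card :=
      Finset.card_le_card hsub
    have h2 : (univ.filter (fun j => v i0 ≤ v j)).card ≤ k := by
      have := mem_filter.mp hi0
      exact this.2
    exact h1.trans h2

/-- There is a permutation of `Fin n` intertwining `σ ∘ i.succAbove` and `(σ i).succAbove`. -/
lemma succAbove_perm_exists {n : ℕ} (σ : Equiv.Perm (Fin (n+1))) (i : Fin (n+1)) :
    ∃ τ : Equiv.Perm (Fin n), ∀ j, σ (i.succAbove j) = (σ i).succAbove (τ j) := by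
  have hf : Function.Injective (fun j : Fin n => σ (i.succAbove j)) :=
    σ.injective.comp (Fin.succAbove_right_injective)
  have hg : Function.Injective ((σ i).succAbove) := Fin.succAbove_right_injective
  have hr : Set.range (fun j : Fin n => σ (i.succAbove j)) = Set.range ((σ i).succAbove) := by
    rw [Fin.range_succAbove]
    ext x
    constructor
    · rintro ⟨j, rfl⟩
      simp only [Set.mem_compl_iff, Set.mem_singleton_iff]
      intro h
      exact (Fin.succAbove_ne i j) (σ.injective h)
    · intro hx
      have : σ.symm x ≠ i := by
        intro h
        apply hx
        simp [← h]
      obtain ⟨j, hj⟩ := Fin.exists_succAbove_eq this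
      exact ⟨j, by simp [hj]⟩
  let e1 := Equiv.ofInjective _ hf
  let e2 := Equiv.ofInjective _ hg
  refine ⟨e1.trans ((Equiv.setCongr hr).trans e2.symm), fun j => ?_⟩
  have : (σ i).succAbove (e2.symm ((Equiv.setCongr hr) (e1 j))) =
      ((Equiv.setCongr hr) (e1 j) : Fin (n+1)) := Equiv.apply_ofInjective_symm hg _
  simpa [e1] using this.symm

section Aux
variable {E : Type*} {n : ℕ} (M : (Fin n → E) → E → ℝ)
  (hMsym : ∀ (τ : Equiv.Perm (Fin n)) (w : Fin n → E) (e : E), M (w ∘ τ) e = M w e)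

/-- Score function. -/
noncomputable def cF (z : Fin (n+1) → E) (i : Fin (n+1)) : ℝ :=
  M (fun j => z (i.succAbove j)) (z i)

include hMsym in
lemma cF_perm (σ : Equiv.Perm (Fin (n+1))) (z : Fin (n+1) → E) (i : Fin (n+1)) :
    cF M (z ∘ σ) i = cF M z (σ i) := by
  obtain ⟨τ, hτ⟩ := succAbove_perm_exists σ i
  unfold cF
  have : (fun j => z (σ (i.succAbove j))) = (fun j => z ((σ i).succAbove j)) ∘ τ := by
    funext j; simp [hτ j]
  simp only [Function.comp_apply]
  rw [this, hMsym τ]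

/-- Rank-from-top count. -/
noncomputable def cG (z : Fin (n+1) → E) (i : Fin (n+1)) : ℕ :=
  (univ.filter (fun j => cF M z i ≤ cF M z j)).card

include hMsym in
lemma cG_perm (σ : Equiv.Perm (Fin (n+1))) (z : Fin (n+1) → E) (i : Fin (n+1)) :
    cG M (z ∘ σ) i = cG M z (σ i) := by
  unfold cG
  simp only [cF_perm M hMsym σ]
  apply Finset.card_bij' (fun j _ => σ j) (fun j _ => σ.symm j)
  · intro a ha; simp only [mem_filter, mem_univ, true_and] at ha ⊢; exact ha
  · intro a ha; simp only [mem_filter, mem_univ, true_and] at ha ⊢; simpa using ha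
  · intro a _; simp
  · intro a _; simp
end Aux

section Meas
variable {E : Type*} [MeasurableSpace E] {n : ℕ} {M : (Fin n → E) → E → ℝ}
  (hM : Measurable (fun p : (Fin n → E) × E => M p.1 p.2))

include hM in
lemma cF_meas (i : Fin (n+1)) : Measurable (fun z => cF M z i) := by
  have : Measurable (fun z : Fin (n+1) → E =>
      ((fun j => z (i.succAbove j), z i) : (Fin n → E) × E)) :=
    (measurable_pi_lambda _ (fun j => measurable_pi_apply _)).prodMk (measurable_pi_apply i)
  exact hM.comp this

include hM in
lemma cG_meas (i : Fin (n+1)) : Measurable (fun z => cG M z i) := by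
  have : (fun z : Fin (n+1) → E => cG M z i) =
      fun z => ∑ j : Fin (n+1), if cF M z i ≤ cF M z j then 1 else 0 := by
    funext z; exact Finset.card_filter _ _
  rw [this]
  exact Finset.measurable_sum _ (fun j _ =>
    Measurable.ite (measurableSet_le (cF_meas hM i) (cF_meas hM j))
      measurable_const measurable_const)
end Meas

/-- Finite-sample validity of conformal prediction (display (3) of the paper):
for exchangeable data `Z` and a measurable non-conformity measure `M` symmetric
in its first argument, with scores `μ_i = M((Z_j)_{j ≠ i}, Z_i)`, one has
`P(#{i : μ_i ≥ μ_{n+1}} > (n+1)α) ≥ 1 − α` for every `α ∈ (0,1)`. -/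
theorem stmt_2
    {Ω : Type*} [MeasurableSpace Ω] (P : Measure Ω) [IsProbabilityMeasure P]
    {E : Type*} [MeasurableSpace E]
    (n : ℕ) (hn : 1 ≤ n)
    (Z : Ω → Fin (n + 1) → E) (hZ : Measurable Z)
    (hZexch : ∀ σ : Equiv.Perm (Fin (n + 1)),
      Measure.map (fun ω => Z ω ∘ σ) P = Measure.map Z P)
    (M : (Fin n → E) → E → ℝ)
    (hM : Measurable (fun p : (Fin n → E) × E => M p.1 p.2))
    (hMsym : ∀ (τ : Equiv.Perm (Fin n)) (w : Fin n → E) (e : E), M (w ∘ τ) e = M w e)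
    (μ : Fin (n + 1) → Ω → ℝ)
    (hμdef : ∀ (i : Fin (n + 1)) (ω : Ω),
      μ i ω = M (fun j : Fin n => Z ω (i.succAbove j)) (Z ω i))
    (α : ℝ) (hα : α ∈ Set.Ioo (0 : ℝ) 1) :
    ENNReal.ofReal (1 - α) ≤
      P {ω | ((n : ℝ) + 1) * α <
        ((Finset.univ.filter
          (fun i : Fin (n + 1) => μ (Fin.last n) ω ≤ μ i ω)).card : ℝ)} := by
  obtain ⟨hα0, hα1⟩ := hα
  set k : ℕ := ⌊((n : ℝ) + 1) * α⌋₊ with hk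
  have hnα_nonneg : (0 : ℝ) ≤ ((n : ℝ) + 1) * α := by positivity
  -- the "bad" sets
  set A : Fin (n + 1) → Set (Fin (n + 1) → E) :=
    fun i => {z | cG M z i ≤ k} with hA
  have hAmeas : ∀ i, MeasurableSet (A i) := fun i =>
    (cG_meas hM i) (measurableSet_Iic : MeasurableSet (Set.Iic k))
  -- all bad sets have the same probability
  have hAeq : ∀ i, P (Z ⁻¹' A i) = P (Z ⁻¹' A (Fin.last n)) := by
    intro i
    set σ : Equiv.Perm (Fin (n + 1)) := Equiv.swap i (Fin.last n) with hσ
    have hZσ : Measurable (fun ω => Z ω ∘ σ) :=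
      measurable_pi_lambda _ (fun j => (measurable_pi_apply (σ j)).comp hZ)
    have h1 : Measure.map (fun ω => Z ω ∘ σ) P (A (Fin.last n)) =
        Measure.map Z P (A (Fin.last n)) := by rw [hZexch σ]
    rw [Measure.map_apply hZσ (hAmeas _), Measure.map_apply hZ (hAmeas _)] at h1
    have hset : (fun ω => Z ω ∘ σ) ⁻¹' A (Fin.last n) = Z ⁻¹' A i := by
      ext ω
      simp only [Set.mem_preimage, hA, Set.mem_setOf_eq]
      rw [cG_perm M hMsym σ]
      have : σ (Fin.last n) = i := Equiv.swap_apply_right _ _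
      rw [this]
    rw [hset] at h1
    exact h1
  -- sum of probabilities of bad sets is at most k
  have hsum : ∑ i : Fin (n + 1), P (Z ⁻¹' A i) ≤ (k : ℝ≥0∞) := by
    have h1 : ∀ i : Fin (n + 1), P (Z ⁻¹' A i) =
        ∫⁻ ω, (Z ⁻¹' A i).indicator (fun _ => (1 : ℝ≥0∞)) ω ∂P := by
      intro i
      rw [lintegral_indicator (hZ (hAmeas i))]
      simp
    calc ∑ i : Fin (n + 1), P (Z ⁻¹' A i)
        = ∫⁻ ω, ∑ i : Fin (n + 1),
            (Z ⁻¹' A i).indicator (fun _ => (1 : ℝ≥0∞)) ω ∂P := by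
          rw [lintegral_finset_sum]
          · exact Finset.sum_congr rfl (fun i _ => h1 i)
          · exact fun i _ => measurable_const.indicator (hZ (hAmeas i))
      _ ≤ ∫⁻ _, (k : ℝ≥0∞) ∂P := by
          apply lintegral_mono
          intro ω
          dsimp only
          have hind : ∑ i : Fin (n + 1),
              (Z ⁻¹' A i).indicator (fun _ => (1 : ℝ≥0∞)) ω =
              ((Finset.univ.filter (fun i : Fin (n + 1) => cG M (Z ω) i ≤ k)).card :
                ℝ≥0∞) := by
            rw [Finset.card_filter]
            push_cast
            refine Finset.sum_congr rfl (fun i _ => ?_)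
            by_cases h : cG M (Z ω) i ≤ k <;>
              simp [Set.indicator_apply, hA, Set.mem_preimage, Set.mem_setOf_eq, h]
          rw [hind]
          have hpig : (Finset.univ.filter
              (fun i : Fin (n + 1) => cG M (Z ω) i ≤ k)).card ≤ k :=
            conformal_pigeon (cF M (Z ω)) k
          exact_mod_cast hpig
      _ = (k : ℝ≥0∞) := by simp
  -- deduce the bound on the last bad set
  have hcard : ∑ i : Fin (n + 1), P (Z ⁻¹' A i) =
      ((n : ℝ≥0∞) + 1) * P (Z ⁻¹' A (Fin.last n)) := by
    rw [Finset.sum_congr rfl (fun i _ => hAeq i), Finset.sum_const, Finset.card_univ,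
      Fintype.card_fin]
    simp [nsmul_eq_mul]
  have hmain : ((n : ℝ≥0∞) + 1) * P (Z ⁻¹' A (Fin.last n)) ≤ (k : ℝ≥0∞) := by
    rw [← hcard]; exact hsum
  have hkle : (k : ℝ≥0∞) ≤ ((n : ℝ≥0∞) + 1) * ENNReal.ofReal α := by
    have h1 : (k : ℝ) ≤ ((n : ℝ) + 1) * α := Nat.floor_le hnα_nonneg
    have h2 : (k : ℝ≥0∞) = ENNReal.ofReal (k : ℝ) := by
      rw [ENNReal.ofReal_natCast]
    rw [h2]
    calc ENNReal.ofReal (k : ℝ) ≤ ENNReal.ofReal (((n : ℝ) + 1) * α) :=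
          ENNReal.ofReal_le_ofReal h1
      _ = ENNReal.ofReal ((n : ℝ) + 1) * ENNReal.ofReal α := by
          rw [ENNReal.ofReal_mul (by positivity)]
      _ = ((n : ℝ≥0∞) + 1) * ENNReal.ofReal α := by
          rw [ENNReal.ofReal_add (by positivity) zero_le_one, ENNReal.ofReal_natCast,
            ENNReal.ofReal_one]
  have hPA : P (Z ⁻¹' A (Fin.last n)) ≤ ENNReal.ofReal α := by
    have h := hmain.trans hkle
    have hne : ((n : ℝ≥0∞) + 1) ≠ 0 := by simp
    have hnetop : ((n : ℝ≥0∞) + 1) ≠ ⊤ := by simp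
    exact (ENNReal.mul_le_mul_iff_right hne hnetop).mp h
  -- identify the target set as the complement of the last bad set
  have hTset : {ω | ((n : ℝ) + 1) * α <
      ((Finset.univ.filter
        (fun i : Fin (n + 1) => μ (Fin.last n) ω ≤ μ i ω)).card : ℝ)} =
      (Z ⁻¹' A (Fin.last n))ᶜ := by
    ext ω
    simp only [Set.mem_setOf_eq, Set.mem_compl_iff, Set.mem_preimage, hA]
    have hμF : ∀ i, μ i ω = cF M (Z ω) i := fun i => hμdef i ω
    have hcards : (Finset.univ.filter
        (fun i : Fin (n + 1) => μ (Fin.last n) ω ≤ μ i ω)).card = cG M (Z ω) (Fin.last n) := by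
      unfold cG
      congr 1
      apply Finset.filter_congr
      intro i _
      rw [hμF, hμF]
    rw [hcards]
    rw [← not_le]
    exact not_congr (Nat.le_floor_iff hnα_nonneg).symm
  rw [hTset, prob_compl_eq_one_sub (hZ (hAmeas _))]
  have h1 : ENNReal.ofReal (1 - α) = 1 - ENNReal.ofReal α := by
    rw [ENNReal.ofReal_sub _ (le_of_lt hα0), ENNReal.ofReal_one]
  rw [h1]
  exact tsub_le_tsub_left hPA 1
end

section
/- Let f : ℝ → ℝ. Suppose that for every α ∈ ℝ the superlevel set S_α = {y ∈ ℝ : f(y) > α} is one-sided, meaning that S_α is upward closed (y ∈ S_α and y ≤ y' imply y' ∈ S_α) or S_α is downward closed (y ∈ S_α and y' ≤ y imply y' ∈ S_α). Then f is monotone: either f is nondecreasing (a ≤ b implies f(a) ≤ f(b)) or f is nonincreasing (a ≤ b implies f(a) ≥ f(b)). -/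
/-- Answer to Question (VI) of the paper: if every superlevel set
`{y : f y > α}` of `f : ℝ → ℝ` is one-sided (upward closed or downward closed),
then `f` is monotone (nondecreasing or nonincreasing). -/
theorem stmt_5
    (f : ℝ → ℝ)
    (h : ∀ α : ℝ,
      (∀ y y' : ℝ, α < f y → y ≤ y' → α < f y') ∨
      (∀ y y' : ℝ, α < f y → y' ≤ y → α < f y')) :
    Monotone f ∨ Antitone f := by
  by_contra hc
  push_neg at hc
  obtain ⟨hm, ha⟩ := hc
  simp only [Monotone, Antitone, not_forall, not_le] at hm ha
  obtain ⟨a, b, hab, hfba⟩ := hm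
  obtain ⟨c, d, hcd, hfcd⟩ := ha
  have hdown : ∀ y y' : ℝ, f b < f y → y' ≤ y → f b < f y' := by
    refine (h (f b)).resolve_left ?_
    intro hup
    exact lt_irrefl _ (hup a b hfba hab)
  have hup : ∀ y y' : ℝ, f c < f y → y ≤ y' → f c < f y' := by
    refine (h (f c)).resolve_right ?_
    intro hdn
    exact lt_irrefl _ (hdn d c hfcd hcd)
  have h1 : f c < f (max b d) := hup d _ hfcd (le_max_right _ _)
  have h2 : f (max b d) ≤ f b := by
    by_contra h2
    push_neg at h2
    exact lt_irrefl _ (hdown (max b d) b h2 (le_max_left _ _))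
  have h3 : f b < f (min a c) := hdown a _ hfba (min_le_left _ _)
  have h4 : f (min a c) ≤ f c := by
    by_contra h4
    push_neg at h4
    exact lt_irrefl _ (hup (min a c) c h4 (min_le_right _ _))
  linarith
end

section
/- Let n ≥ 2, let X_1,…,X_{n+1} ∈ ℝ and Y_1,…,Y_{n+1} ∈ ℝ, and define the non-conformity scores μ_i = (Σ_{j=1}^{n+1} X_j) + min_{j ∈ {1,…,n+1}, j ≠ i} Y_j + Y_i for i = 1,…,n+1. For each i ∈ {1,…,n}, writing m_i = min_{j ∈ {1,…,n}, j ≠ i} Y_j, one has: μ_i ≥ μ_{n+1} if and only if (Y_{n+1} ≤ Y_i or Y_{n+1} ≤ m_i), equivalently if and only if Y_{n+1} ≤ max(Y_i, m_i). -/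
lemma inf'_set_eq {α β : Type*} [LinearOrder β] {s t : Finset α} (h : s = t)
    (hs : s.Nonempty) (ht : t.Nonempty) (f : α → β) : s.inf' hs f = t.inf' ht f := by
  subst h; rfl

lemma erase_last_eq (n : ℕ) :
    (Finset.univ.erase (Fin.last n)) = Finset.univ.image Fin.castSucc := by
  ext j
  simp [Fin.exists_castSucc_eq, eq_comm]

lemma erase_castSucc_eq (n : ℕ) (i : Fin n) :
    (Finset.univ.erase i.castSucc)
      = insert (Fin.last n) ((Finset.univ.erase i).image Fin.castSucc) := by
  ext j
  induction j using Fin.lastCases with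
  | last => simp [(Fin.castSucc_lt_last i).ne']
  | cast k =>
    simp [Fin.castSucc_injective, (Fin.castSucc_lt_last k).ne,
      (Fin.castSucc_injective n).eq_iff, eq_comm]

/-- Example 1 of the paper (answer to Question (I)): for the scores
`μ_i = (Σ_j X_j) + min_{j ≠ i} Y_j + Y_i`, for each `i ∈ {1,…,n}` one has
`μ_i ≥ μ_{n+1}` iff `Y_{n+1} ≤ Y_i` or `Y_{n+1} ≤ m_i`, iff
`Y_{n+1} ≤ max(Y_i, m_i)`, where `m_i = min_{j ≤ n, j ≠ i} Y_j`. -/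
theorem stmt_6
    (n : ℕ) (hn : 2 ≤ n)
    (X Y : Fin (n + 1) → ℝ)
    (μ : Fin (n + 1) → ℝ)
    (hμ : ∀ i : Fin (n + 1),
      μ i = (∑ j, X j)
        + (Finset.univ.erase i).inf'
            (by
              rw [← Finset.card_pos, Finset.card_erase_of_mem (Finset.mem_univ i),
                Finset.card_univ, Fintype.card_fin]
              omega) Y
        + Y i)
    (m : Fin n → ℝ)
    (hm : ∀ i : Fin n,
      m i = (Finset.univ.erase i).inf'
        (by
          rw [← Finset.card_pos, Finset.card_erase_of_mem (Finset.mem_univ i),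
            Finset.card_univ, Fintype.card_fin]
          omega) (fun j : Fin n => Y j.castSucc)) :
    ∀ i : Fin n,
      (μ (Fin.last n) ≤ μ i.castSucc ↔
        (Y (Fin.last n) ≤ Y i.castSucc ∨ Y (Fin.last n) ≤ m i)) ∧
      (μ (Fin.last n) ≤ μ i.castSucc ↔
        Y (Fin.last n) ≤ max (Y i.castSucc) (m i)) := by
  intro i
  have hne : (Finset.univ.erase i : Finset (Fin n)).Nonempty := by
    rw [← Finset.card_pos, Finset.card_erase_of_mem (Finset.mem_univ i),
      Finset.card_univ, Fintype.card_fin]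
    omega
  have hneU : (Finset.univ : Finset (Fin n)).Nonempty := ⟨i, Finset.mem_univ i⟩
  -- μ at last
  have hlast : μ (Fin.last n)
      = (∑ j, X j) + min (Y i.castSucc) (m i) + Y (Fin.last n) := by
    rw [hμ, inf'_set_eq (erase_last_eq n) _ (hneU.image _) Y, Finset.inf'_image]
    have h1 : (Finset.univ : Finset (Fin n))
        = insert i (Finset.univ.erase i) := by
      rw [Finset.insert_erase (Finset.mem_univ i)]
    rw [inf'_set_eq h1 _ (Finset.insert_nonempty _ _) (Y ∘ Fin.castSucc), Finset.inf'_insert, hm]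
    rfl
  -- μ at i.castSucc
  have hi : μ i.castSucc
      = (∑ j, X j) + min (Y (Fin.last n)) (m i) + Y i.castSucc := by
    rw [hμ, inf'_set_eq (erase_castSucc_eq n i) _ (Finset.insert_nonempty _ _) Y,
      Finset.inf'_insert, Finset.inf'_image, hm]
    · rfl
    · exact hne.image _
  rw [hlast, hi]
  set a := Y i.castSucc
  set b := m i
  set t := Y (Fin.last n)
  have key : (∑ j, X j) + min a b + t ≤ (∑ j, X j) + min t b + a ↔ (t ≤ a ∨ t ≤ b) := by
    constructor
    · intro h
      by_contra hc
      push_neg at hc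
      obtain ⟨h1, h2⟩ := hc
      rw [min_eq_right h2.le] at h
      rcases le_total a b with h3 | h3
      · rw [min_eq_left h3] at h; linarith
      · rw [min_eq_right h3] at h; linarith
    · rintro (h | h)
      · rcases le_total t b with h2 | h2
        · rw [min_eq_left h2]
          have := min_le_left a b; linarith
        · rw [min_eq_right h2]
          have := min_le_right a b; linarith
      · rw [min_eq_left h]
        have := min_le_left a b; linarith
  exact ⟨key, key.trans (le_max_iff).symm⟩
end

section
/- Let n ≥ 1, p ≥ 1, η ∈ ℝ with 1 + η > 0, let X_i = (X_{i1},…,X_{ip}) ∈ ℝ^p and Y_i ∈ ℝ for i = 1,…,n+1, and set S_i = Σ_{j=1}^p X_{ij}. Define the non-conformity scores μ_i = Y_i − [ S_i + η Σ_{j ∈ {1,…,n+1}, j ≠ i} (Y_j − S_j) ] for i = 1,…,n+1. Then for each i ∈ {1,…,n}: μ_i ≥ μ_{n+1} if and only if Y_{n+1} ≤ Y_i + (S_{n+1} − S_i). -/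
/-- Key equivalence in the proof of Theorem 3 of the paper: for the scores
`μ_i = Y_i − [S_i + η Σ_{j ≠ i} (Y_j − S_j)]` with `1 + η > 0`, one has
`μ_i ≥ μ_{n+1}` iff `Y_{n+1} ≤ Y_i + (S_{n+1} − S_i)` for each `i ∈ {1,…,n}`. -/
theorem stmt_10
    (n p : ℕ) (hn : 1 ≤ n) (hp : 1 ≤ p)
    (η : ℝ) (hη : 0 < 1 + η)
    (X : Fin (n + 1) → Fin p → ℝ) (Y : Fin (n + 1) → ℝ)
    (S : Fin (n + 1) → ℝ) (hS : ∀ i, S i = ∑ j, X i j)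
    (μ : Fin (n + 1) → ℝ)
    (hμ : ∀ i : Fin (n + 1),
      μ i = Y i - (S i + η * ∑ j ∈ Finset.univ.erase i, (Y j - S j))) :
    ∀ i : Fin n,
      μ (Fin.last n) ≤ μ i.castSucc ↔
        Y (Fin.last n) ≤ Y i.castSucc + (S (Fin.last n) - S i.castSucc) := by
  intro i
  have key : ∀ k : Fin (n + 1),
      μ k = (1 + η) * (Y k - S k) - η * ∑ j, (Y j - S j) := by
    intro k
    have herase : ∑ j ∈ Finset.univ.erase k, (Y j - S j)
        = (∑ j, (Y j - S j)) - (Y k - S k) := by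
      rw [Finset.sum_erase_eq_sub (Finset.mem_univ k)]
    rw [hμ k, herase]; ring
  rw [key, key]
  constructor
  · intro h
    nlinarith
  · intro h
    nlinarith
end

section
/- Let n ≥ 1, p ≥ 1, η ∈ ℝ with 1 + η > 0, let X_i ∈ ℝ^p with coordinate sum S_i = Σ_{j=1}^p X_{ij} for i = 1,…,n+1, and let Y_1,…,Y_n ∈ ℝ. For a provisional value y ∈ ℝ set Y_{n+1} = y and define μ_i(y) = Y_i − [ S_i + η Σ_{j ≠ i} (Y_j − S_j) ] for i = 1,…,n+1. Let a_i = Y_i + (S_{n+1} − S_i) for i = 1,…,n. Then for every α ∈ (0,1) with (n+1)α not an integer and r := ⌊(n+1)α⌋ satisfying 1 ≤ r ≤ n, the conformal prediction region {y ∈ ℝ : #{i ∈ {1,…,n+1} : μ_i(y) ≥ μ_{n+1}(y)} > (n+1)α} equals the one-sided interval {y ∈ ℝ : y ≤ a_{(n+1−r)}}, where a_{(k)} denotes the k-th smallest value among a_1,…,a_n. -/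
lemma count_ge_iff {n : ℕ} (b : Fin n → ℝ) (hb : Monotone b) {r : ℕ}
    (hr1 : 1 ≤ r) (hrn : r ≤ n) (y : ℝ) :
    (r ≤ (Finset.univ.filter fun i => y ≤ b i).card) ↔ y ≤ b ⟨n - r, by omega⟩ := by
  set i0 : Fin n := ⟨n - r, by omega⟩ with hi0
  constructor
  · intro h
    by_contra hy
    push_neg at hy
    have hsub : (Finset.univ.filter fun i => y ≤ b i) ⊆ Finset.Ioi i0 := by
      intro i hi
      rw [Finset.mem_filter] at hi
      rw [Finset.mem_Ioi]
      by_contra hle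
      push_neg at hle
      exact absurd (hi.2.trans (hb hle)) (not_le.mpr hy)
    have hc := Finset.card_le_card hsub
    rw [Fin.card_Ioi] at hc
    simp only [hi0] at hc
    omega
  · intro hy
    have hsub : Finset.Ici i0 ⊆ Finset.univ.filter fun i => y ≤ b i := by
      intro i hi
      rw [Finset.mem_Ici] at hi
      exact Finset.mem_filter.mpr ⟨Finset.mem_univ _, hy.trans (hb hi)⟩
    have hc := Finset.card_le_card hsub
    rw [Fin.card_Ici] at hc
    simp only [hi0] at hc
    omega


/-- Theorem 3 of the paper: for the non-conformity measure (10) with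
`β₂ = 0, β₁ = 1, γ = −1` and `1 + η > 0`, the conformal prediction region
`{y : #{i : μ_i(y) ≥ μ_{n+1}(y)} > (n+1)α}` is the one-sided interval
`(−∞, a_{(n+1−r)}]`, where `a_i = Y_i + (S_{n+1} − S_i)`, `r = ⌊(n+1)α⌋`,
and `a_{(k)}` denotes the k-th smallest of `a_1, …, a_n`. -/
theorem stmt_11
    (n p : ℕ) (hn : 1 ≤ n) (hp : 1 ≤ p)
    (η : ℝ) (hη : 0 < 1 + η)
    (X : Fin (n + 1) → Fin p → ℝ) (Y : Fin n → ℝ)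
    (S : Fin (n + 1) → ℝ) (hS : ∀ i, S i = ∑ j, X i j)
    (μ : ℝ → Fin (n + 1) → ℝ)
    (hμ : ∀ (y : ℝ) (i : Fin (n + 1)),
      μ y i = (Fin.snoc Y y : Fin (n + 1) → ℝ) i
        - (S i + η * ∑ j ∈ Finset.univ.erase i,
            ((Fin.snoc Y y : Fin (n + 1) → ℝ) j - S j)))
    (a : Fin n → ℝ)
    (ha : ∀ i : Fin n, a i = Y i + (S (Fin.last n) - S i.castSucc)) :
    ∀ (α : ℝ) (_ : α ∈ Set.Ioo (0 : ℝ) 1)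
      (_ : ∀ k : ℤ, ((n : ℝ) + 1) * α ≠ (k : ℝ))
      (r : ℕ) (_ : (r : ℤ) = ⌊((n : ℝ) + 1) * α⌋) (_ : 1 ≤ r) (_ : r ≤ n),
      {y : ℝ | ((n : ℝ) + 1) * α <
          ((Finset.univ.filter
            (fun i : Fin (n + 1) => μ y (Fin.last n) ≤ μ y i)).card : ℝ)}
        = Set.Iic ((a ∘ Tuple.sort a) ⟨n - r, by omega⟩) := by
  intro α hα hni r hr hr1 hrn
  ext y
  simp only [Set.mem_setOf_eq, Set.mem_Iic]
  set Z : Fin (n + 1) → ℝ := Fin.snoc Y y with hZ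
  have hμ' : ∀ i, μ y i = (1 + η) * (Z i - S i) - η * ∑ j, (Z j - S j) := by
    intro i
    rw [hμ y i, ← Finset.sum_erase_add Finset.univ _ (Finset.mem_univ i)]
    ring
  have hZlast : Z (Fin.last n) = y := Fin.snoc_last _ _
  have hcmp : ∀ i, (μ y (Fin.last n) ≤ μ y i) ↔ (y - S (Fin.last n) ≤ Z i - S i) := by
    intro i
    rw [hμ' i, hμ' (Fin.last n), hZlast]
    constructor <;> intro h <;> nlinarith
  -- replace predicate
  have hfilter : (Finset.univ.filter fun i : Fin (n + 1) => μ y (Fin.last n) ≤ μ y i)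
      = Finset.univ.filter fun i : Fin (n + 1) => y - S (Fin.last n) ≤ Z i - S i :=
    Finset.filter_congr fun i _ => by simpa using hcmp i
  have hcard : (Finset.univ.filter fun i : Fin (n + 1) => μ y (Fin.last n) ≤ μ y i).card
      = (Finset.univ.filter fun k : Fin n => y ≤ a k).card + 1 := by
    rw [hfilter, Finset.card_filter, Fin.sum_univ_castSucc, Finset.card_filter]
    have hlastQ : (if y - S (Fin.last n) ≤ Z (Fin.last n) - S (Fin.last n) then 1 else 0) = 1 := by
      rw [if_pos (by rw [hZlast])]
    rw [hlastQ]
    congr 1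
    apply Finset.sum_congr rfl
    intro k _
    have hZk : Z (Fin.castSucc k) = Y k := Fin.snoc_castSucc _ _ _
    have hiff : (y - S (Fin.last n) ≤ Z (Fin.castSucc k) - S (Fin.castSucc k)) ↔ (y ≤ a k) := by
      rw [hZk, ha k]
      constructor <;> intro h <;> linarith
    simp [hiff]
  have hperm : (Finset.univ.filter fun k : Fin n => y ≤ a k).card
      = (Finset.univ.filter fun k : Fin n => y ≤ (a ∘ Tuple.sort a) k).card := by
    apply Finset.card_bij' (fun k _ => (Tuple.sort a).symm k) (fun k _ => Tuple.sort a k)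
    · intro k hk
      rw [Finset.mem_filter] at hk ⊢
      refine ⟨Finset.mem_univ _, ?_⟩
      simpa using hk.2
    · intro k hk
      rw [Finset.mem_filter] at hk ⊢
      refine ⟨Finset.mem_univ _, ?_⟩
      simpa using hk.2
    · intro k _; simp
    · intro k _; simp
  rw [hcard, hperm]
  rw [← count_ge_iff (a ∘ Tuple.sort a) (Tuple.monotone_sort a) hr1 hrn y]
  set c := (Finset.univ.filter fun k : Fin n => y ≤ (a ∘ Tuple.sort a) k).card with hcdef
  have hfl : (⌊((n : ℝ) + 1) * α⌋ : ℝ) = (r : ℝ) := by exact_mod_cast hr.symm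
  constructor
  · intro h
    have h2 : ⌊((n : ℝ) + 1) * α⌋ < ((c + 1 : ℕ) : ℤ) := Int.floor_lt.mpr (by push_cast; push_cast at h; linarith)
    omega
  · intro h
    have h2 : ((r : ℝ)) ≤ (c : ℝ) := by exact_mod_cast h
    have h3 := Int.lt_floor_add_one (((n : ℝ) + 1) * α)
    push_cast
    linarith
end

section
/- Let n ≥ 1, p ≥ 1, η ∈ ℝ with 1 + η > 0, let X_i ∈ ℝ^p with coordinate sum S_i = Σ_{j=1}^p X_{ij} for i = 1,…,n+1, and let Y_1,…,Y_n ∈ ℝ. For a provisional value y ∈ ℝ set Y_{n+1} = y and define μ_i(y) = −Y_i + S_i + η Σ_{j ∈ {1,…,n+1}, j ≠ i} (Y_j − S_j) for i = 1,…,n+1. Let a_i = Y_i + (S_{n+1} − S_i) for i = 1,…,n. Then (a) for each i ∈ {1,…,n}, μ_i(y) ≥ μ_{n+1}(y) if and only if y ≥ a_i; and (b) for every α ∈ (0,1) with (n+1)α not an integer and r := ⌊(n+1)α⌋ satisfying 1 ≤ r ≤ n, the conformal prediction region {y ∈ ℝ : #{i ∈ {1,…,n+1} : μ_i(y) ≥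 μ_{n+1}(y)} > (n+1)α} equals the one-sided interval {y ∈ ℝ : y ≥ a_{(r)}}, where a_{(k)} denotes the k-th smallest value among a_1,…,a_n. -/
/-!
The score of the `i`-th point is `η Σ_j v_j - (1 + η) v_i` in the residuals `v_j = Y_j - S_j`, so
`μ_i(y) - μ_{n+1}(y) = (1 + η) (y - a_i)` and, as `1 + η > 0`, the point `i` conforms iff `a_i ≤ y`.
The count in the prediction region is therefore `1 + #{i | a_i ≤ y}`, which exceeds `(n + 1) α`
exactly when it exceeds `⌊(n + 1) α⌋ = r`, i.e. when at least `r` of the `a_i` are at most `y`;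
for the sorted tuple this is the statement `a_{(r)} ≤ y`.
-/

open Finset

theorem Fin.card_filter_univ_castSucc {n : ℕ} (p : Fin (n + 1) → Prop) [DecidablePred p] :
    #{x | p x} = #{x : Fin n | p x.castSucc} + if p (Fin.last n) then 1 else 0 := by
  rw [card_filter, card_filter, Fin.sum_univ_castSucc]

theorem Tuple.lt_card_filter_le_iff_sort_le {α : Type*} [LinearOrder α] {n : ℕ}
    (a : Fin n → α) (k : Fin n) (y : α) :
    (k : ℕ) < #{i | a i ≤ y} ↔ a (Tuple.sort a k) ≤ y := by
  rw [← card_equiv (Tuple.sort a) (s := {j | a (Tuple.sort a j) ≤ y}) (by simp)]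
  exact Fin.lt_card_filter_univ_iff_apply_of_imp _
    fun _ _ hji hi => (Tuple.monotone_sort a hji).trans hi

section LeaveOneOut

variable {R ι : Type*} [CommRing R] [Fintype ι] [DecidableEq ι]

def leaveOneOutScore (η : R) (v : ι → R) (i : ι) : R :=
  -v i + η * ∑ j ∈ univ.erase i, v j

theorem leaveOneOutScore_sub (η : R) (v : ι → R) (i l : ι) :
    leaveOneOutScore η v i - leaveOneOutScore η v l = (1 + η) * (v l - v i) := by
  rw [leaveOneOutScore, leaveOneOutScore, sum_erase_eq_sub (mem_univ i),
    sum_erase_eq_sub (mem_univ l)]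
  ring

end LeaveOneOut

/-- Left-bounded companion of Theorem 3 (Theorem 4 of the paper, corrected):
for the scores `μ_i(y) = −Y_i + S_i + η Σ_{j ≠ i} (Y_j − S_j)` with
`1 + η > 0`, (a) `μ_i(y) ≥ μ_{n+1}(y)` iff `y ≥ a_i`, and (b) the conformal
prediction region is the one-sided interval `[a_{(r)}, ∞)`, where
`a_i = Y_i + (S_{n+1} − S_i)` and `r = ⌊(n+1)α⌋`. -/
theorem stmt_12
    (n : ℕ)
    (η : ℝ) (hη : 0 < 1 + η)
    (Y : Fin n → ℝ)
    (S : Fin (n + 1) → ℝ)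
    (μ : ℝ → Fin (n + 1) → ℝ)
    (hμ : ∀ (y : ℝ) (i : Fin (n + 1)),
      μ y i = -(Fin.snoc Y y : Fin (n + 1) → ℝ) i
        + S i + η * ∑ j ∈ Finset.univ.erase i,
            ((Fin.snoc Y y : Fin (n + 1) → ℝ) j - S j))
    (a : Fin n → ℝ)
    (ha : ∀ i : Fin n, a i = Y i + (S (Fin.last n) - S i.castSucc)) :
    (∀ (y : ℝ) (i : Fin n),
      μ y (Fin.last n) ≤ μ y i.castSucc ↔ a i ≤ y) ∧
    (∀ (α : ℝ) (_ : α ∈ Set.Ioo (0 : ℝ) 1)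
      (_ : ∀ k : ℤ, ((n : ℝ) + 1) * α ≠ (k : ℝ))
      (r : ℕ) (_ : (r : ℤ) = ⌊((n : ℝ) + 1) * α⌋) (_ : 1 ≤ r) (_ : r ≤ n),
      {y : ℝ | ((n : ℝ) + 1) * α <
          ((Finset.univ.filter
            (fun i : Fin (n + 1) => μ y (Fin.last n) ≤ μ y i)).card : ℝ)}
        = Set.Ici ((a ∘ Tuple.sort a) ⟨r - 1, by omega⟩)) := by
  have conforms_iff (y : ℝ) (i : Fin n) : μ y (Fin.last n) ≤ μ y i.castSucc ↔ a i ≤ y := by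
    have hdiff : μ y i.castSucc - μ y (Fin.last n) = (1 + η) * (y - a i) := by
      let v : Fin (n + 1) → ℝ := fun j => (Fin.snoc Y y : Fin (n + 1) → ℝ) j - S j
      have hμv (j) : μ y j = leaveOneOutScore η v j := by rw [hμ, leaveOneOutScore]; ring
      rw [hμv, hμv, leaveOneOutScore_sub, ha]
      simp only [v, Fin.snoc_last, Fin.snoc_castSucc]
      ring
    rw [← sub_nonneg, hdiff, mul_nonneg_iff_of_pos_left hη, sub_nonneg]
  refine ⟨conforms_iff, fun α _ _ r hr hr1 hrn => Set.ext fun y => ?_⟩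
  have hcard : #{i | μ y (Fin.last n) ≤ μ y i} = #{i | a i ≤ y} + 1 := by
    simp [Fin.card_filter_univ_castSucc, conforms_iff]
  have hfloor (m : ℕ) : ((n : ℝ) + 1) * α < (m + 1 : ℕ) ↔ r ≤ m := by
    rw [← Nat.lt_succ_iff, ← Int.ofNat_lt, hr, Int.floor_lt]
    norm_cast
  simp only [Set.mem_ofPred_eq, Set.mem_Ici, Function.comp_apply, hcard, hfloor,
    ← Tuple.lt_card_filter_le_iff_sort_le]
  omega
end

section
/- Let n ≥ 1, κ ∈ ℝ, and X_1,…,X_{n+1} ∈ ℝ. Define the non-conformity scores μ_i = X_i² − κ Σ_{j ∈ {1,…,n+1}, j ≠ i} X_j for i = 1,…,n+1. Then for each i ∈ {1,…,n}: μ_i ≥ μ_{n+1} if and only if min(X_i, −(κ + X_i)) ≤ X_{n+1} ≤ max(X_i, −(κ + X_i)), equivalently if and only if |X_{n+1} + κ/2| ≤ |X_i + κ/2|. -/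
lemma key_abs (a b κ : ℝ) : 0 ≤ (a - b) * (a + b + κ) ↔ |b + κ / 2| ≤ |a + κ / 2| := by
  rw [← sq_le_sq]
  constructor <;> intro h <;> nlinarith

lemma key_minmax (a b κ : ℝ) :
    0 ≤ (a - b) * (a + b + κ) ↔ (min a (-(κ + a)) ≤ b ∧ b ≤ max a (-(κ + a))) := by
  rcases le_total a (-(κ + a)) with h | h
  · rw [min_eq_left h, max_eq_right h]
    constructor
    · intro hh; constructor <;> nlinarith
    · rintro ⟨h1, h2⟩; nlinarith
  · rw [min_eq_right h, max_eq_left h]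
    constructor
    · intro hh; constructor <;> nlinarith
    · rintro ⟨h1, h2⟩; nlinarith

/-- Key equivalence behind Theorem 9 of the paper (unsupervised learning): for
the scores `μ_i = X_i² − κ Σ_{j ≠ i} X_j`, one has `μ_i ≥ μ_{n+1}` iff
`min(X_i, −(κ + X_i)) ≤ X_{n+1} ≤ max(X_i, −(κ + X_i))`, iff
`|X_{n+1} + κ/2| ≤ |X_i + κ/2|`, for each `i ∈ {1,…,n}`. -/
theorem stmt_18
    (n : ℕ) (hn : 1 ≤ n) (κ : ℝ)
    (X : Fin (n + 1) → ℝ)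
    (μ : Fin (n + 1) → ℝ)
    (hμ : ∀ i : Fin (n + 1),
      μ i = (X i) ^ 2 - κ * ∑ j ∈ Finset.univ.erase i, X j) :
    ∀ i : Fin n,
      (μ (Fin.last n) ≤ μ i.castSucc ↔
        (min (X i.castSucc) (-(κ + X i.castSucc)) ≤ X (Fin.last n) ∧
         X (Fin.last n) ≤ max (X i.castSucc) (-(κ + X i.castSucc)))) ∧
      (μ (Fin.last n) ≤ μ i.castSucc ↔
        |X (Fin.last n) + κ / 2| ≤ |X i.castSucc + κ / 2|) := by
  intro i
  set a := X i.castSucc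
  set b := X (Fin.last n)
  have hdiff : μ i.castSucc - μ (Fin.last n) = (a - b) * (a + b + κ) := by
    rw [hμ, hμ,
      Finset.sum_erase_eq_sub (Finset.mem_univ i.castSucc),
      Finset.sum_erase_eq_sub (Finset.mem_univ (Fin.last n))]
    ring
  have hle : μ (Fin.last n) ≤ μ i.castSucc ↔ 0 ≤ (a - b) * (a + b + κ) := by
    rw [← hdiff]; constructor <;> intro h <;> linarith
  exact ⟨hle.trans (key_minmax a b κ), hle.trans (key_abs a b κ)⟩
end
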